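/- Let m ≥ 1 be an integer and let B be a subset of the cells of the m × m square grid such that no row of the grid is entirely contained in B and no column of the grid is entirely contained in B. Then |∂B| ≥ √|B|. -/

import Mathlib

/-- The cells of the `m × m` square grid: pairs `(i, j)` with `1 ≤ i, j ≤ m`. -/
def gridCells (m : ℕ) : Finset (ℕ × ℕ) := (Finset.Icc 1 m) ×ˢ (Finset.Icc 1 m)

/-- Two cells are adjacent if they agree in one coordinate and differ by exactly `1`
in the other (i.e. they share a side). -/
def adjacent (c c' : ℕ × ℕ) : Prop :=
  (c.1 = c'.1 ∧ (c.2 + 1 = c'.2 ∨ c'.2 + 1 = c.2)) ∨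
  (c.2 = c'.2 ∧ (c.1 + 1 = c'.1 ∨ c'.1 + 1 = c.1))

-- The boundary `∂B` of a set `B` of cells: all cells (of the grid) not in `B` that are
-- adjacent to some cell of `B`.
open Classical in
noncomputable def gridBoundary (m : ℕ) (B : Finset (ℕ × ℕ)) : Finset (ℕ × ℕ) :=
  (gridCells m).filter (fun c => c ∉ B ∧ ∃ c' ∈ B, adjacent c c')

/-!
Every row that meets `B` also contains a cell outside `B`, so walking along it from one to the
other we must step out of `B` somewhere, and the cell we step onto lies in `∂B`. Hence the rows
meeting `B` are at most `|∂B|` in number, and likewise the columns. Since `B` lies in the product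
of the rows and the columns that meet it, `|B| ≤ |∂B|²`.
-/

lemma Nat.exists_mem_Ico_not_iff_succ {P : ℕ → Prop} {a b : ℕ} (hab : a ≤ b)
    (h : ¬(P a ↔ P b)) : ∃ k ∈ Finset.Ico a b, ¬(P k ↔ P (k + 1)) := by
  induction b, hab using Nat.le_induction with
  | base => exact absurd Iff.rfl h
  | succ n han ih =>
    by_cases hn : P a ↔ P n
    · exact ⟨n, Finset.mem_Ico.mpr ⟨han, n.lt_succ_self⟩, fun h' => h (hn.trans h')⟩
    · obtain ⟨k, hk, hk'⟩ := ih hn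
      rw [Finset.mem_Ico] at hk
      exact ⟨k, Finset.mem_Ico.mpr ⟨hk.1, by omega⟩, hk'⟩

lemma adjacent_comm {c c' : ℕ × ℕ} : adjacent c c' ↔ adjacent c' c := by
  unfold adjacent
  omega

lemma mem_gridBoundary {m : ℕ} {B : Finset (ℕ × ℕ)} {c : ℕ × ℕ} :
    c ∈ gridBoundary m B ↔ c ∈ gridCells m ∧ c ∉ B ∧ ∃ c' ∈ B, adjacent c c' := by
  simp [gridBoundary]

lemma exists_mem_gridBoundary_of_path {m : ℕ} {B : Finset (ℕ × ℕ)} (path : ℕ → ℕ × ℕ)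
    (hadj : ∀ k, adjacent (path k) (path (k + 1)))
    (hgrid : ∀ k ∈ Finset.Icc 1 m, path k ∈ gridCells m)
    {j j' : ℕ} (hj : j ∈ Finset.Icc 1 m) (hj' : j' ∈ Finset.Icc 1 m)
    (hjB : path j ∈ B) (hj'B : path j' ∉ B) : ∃ k, path k ∈ gridBoundary m B := by
  have hchange : ¬(path (min j j') ∈ B ↔ path (max j j') ∈ B) := by
    rcases le_total j j' with h | h <;> simp [h, hjB, hj'B]
  obtain ⟨k, hk, hstep⟩ := Nat.exists_mem_Ico_not_iff_succ (P := (path · ∈ B)) min_le_max hchange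
  simp only [Finset.mem_Ico, Finset.mem_Icc] at hk hj hj'
  have hk_grid : path k ∈ gridCells m := hgrid k (Finset.mem_Icc.mpr (by omega))
  have hk1_grid : path (k + 1) ∈ gridCells m := hgrid (k + 1) (Finset.mem_Icc.mpr (by omega))
  by_cases hkB : path k ∈ B
  · have hk1B : path (k + 1) ∉ B := fun h => hstep (iff_of_true hkB h)
    exact ⟨k + 1, mem_gridBoundary.mpr ⟨hk1_grid, hk1B, path k, hkB, adjacent_comm.mp (hadj k)⟩⟩
  · have hk1B : path (k + 1) ∈ B := by_contra fun h => hstep (iff_of_false hkB h)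
    exact ⟨k, mem_gridBoundary.mpr ⟨hk_grid, hkB, path (k + 1), hk1B, hadj k⟩⟩

lemma image_fst_subset_image_fst_gridBoundary {m : ℕ} {B : Finset (ℕ × ℕ)}
    (hB : B ⊆ gridCells m) (hrow : ∀ i ∈ Finset.Icc 1 m, ∃ j ∈ Finset.Icc 1 m, (i, j) ∉ B) :
    B.image Prod.fst ⊆ (gridBoundary m B).image Prod.fst := by
  intro i hi
  obtain ⟨⟨i, j⟩, hijB, rfl⟩ := Finset.mem_image.mp hi
  have hij : (i, j) ∈ gridCells m := hB hijB
  simp only [gridCells, Finset.mem_product] at hij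
  obtain ⟨j', hj', hj'B⟩ := hrow i hij.1
  obtain ⟨k, hk⟩ := exists_mem_gridBoundary_of_path (fun k => (i, k))
    (fun k => by simp [adjacent]) (fun k hk => Finset.mem_product.mpr ⟨hij.1, hk⟩) hij.2 hj'
    hijB hj'B
  exact Finset.mem_image.mpr ⟨_, hk, rfl⟩

lemma image_snd_subset_image_snd_gridBoundary {m : ℕ} {B : Finset (ℕ × ℕ)}
    (hB : B ⊆ gridCells m) (hcol : ∀ j ∈ Finset.Icc 1 m, ∃ i ∈ Finset.Icc 1 m, (i, j) ∉ B) :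
    B.image Prod.snd ⊆ (gridBoundary m B).image Prod.snd := by
  intro j hj
  obtain ⟨⟨i, j⟩, hijB, rfl⟩ := Finset.mem_image.mp hj
  have hij : (i, j) ∈ gridCells m := hB hijB
  simp only [gridCells, Finset.mem_product] at hij
  obtain ⟨i', hi', hi'B⟩ := hcol j hij.2
  obtain ⟨k, hk⟩ := exists_mem_gridBoundary_of_path (fun k => (k, j))
    (fun k => by simp [adjacent]) (fun k hk => Finset.mem_product.mpr ⟨hk, hij.2⟩) hij.1 hi'
    hijB hi'B
  exact Finset.mem_image.mpr ⟨_, hk, rfl⟩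

theorem boundary_card_of_no_black_row_no_black_col_general (m : ℕ)
    (B : Finset (ℕ × ℕ)) (hB : B ⊆ gridCells m)
    (hrow : ∀ i ∈ Finset.Icc 1 m, ∃ j ∈ Finset.Icc 1 m, (i, j) ∉ B)
    (hcol : ∀ j ∈ Finset.Icc 1 m, ∃ i ∈ Finset.Icc 1 m, (i, j) ∉ B) :
    ((gridBoundary m B).card : ℝ) ≥ Real.sqrt (B.card : ℝ) := by
  have hrows : (B.image Prod.fst).card ≤ (gridBoundary m B).card :=
    (Finset.card_le_card (image_fst_subset_image_fst_gridBoundary hB hrow)).trans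
      Finset.card_image_le
  have hcols : (B.image Prod.snd).card ≤ (gridBoundary m B).card :=
    (Finset.card_le_card (image_snd_subset_image_snd_gridBoundary hB hcol)).trans
      Finset.card_image_le
  have hB_le : B.card ≤ (gridBoundary m B).card ^ 2 :=
    calc B.card ≤ (B.image Prod.fst ×ˢ B.image Prod.snd).card :=
          Finset.card_le_card Finset.subset_product
      _ = (B.image Prod.fst).card * (B.image Prod.snd).card := Finset.card_product _ _
      _ ≤ (gridBoundary m B).card ^ 2 := by rw [sq]; exact Nat.mul_le_mul hrows hcols
  exact (Real.sqrt_le_left (by positivity)).mpr (by exact_mod_cast hB_le)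

theorem boundary_card_of_no_black_row_no_black_col (m : ℕ) (hm : 1 ≤ m)
    (B : Finset (ℕ × ℕ)) (hB : B ⊆ gridCells m)
    (hrow : ∀ i ∈ Finset.Icc 1 m, ∃ j ∈ Finset.Icc 1 m, (i, j) ∉ B)
    (hcol : ∀ j ∈ Finset.Icc 1 m, ∃ i ∈ Finset.Icc 1 m, (i, j) ∉ B) :
    ((gridBoundary m B).card : ℝ) ≥ Real.sqrt (B.card : ℝ) :=
  boundary_card_of_no_black_row_no_black_col_general m B hB hrow hcol
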